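/- arXiv:1705.06032 — 2 statements merged into one kernel-verified Lean document; each statement's English description precedes it below -/
import Mathlib

section
/- Let N ∈ ℕ be square-free and let k > 1 be an integer. Then for all divisors c, d of N, Σ_{t|N} (−1)^{ω(t)+ω(c)} · ( (N·gcd(c,t)/t) · (gcd(t,d)/d) )^{2k} equals Π_{p|N}(p^{2k}−1) if c = d, and equals 0 if c ≠ d (the sum is over positive divisors t of N, and the product is over the prime divisors p of N). -/
open Complex UpperHalfPlane Finset

noncomputable section

/-- The sum of divisors function `σ_k(n) = ∑_{0<d∣n} d^k` (and `σ_k(0) = 0`). -/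
def sigma' (k n : ℕ) : ℕ := ∑ d ∈ n.divisors, d ^ k

/-- `σ_k(n/d)`, equal to `0` when `d ∤ n` (i.e. when `n/d` is not a positive integer). -/
def sigmaDiv (k n d : ℕ) : ℕ := if d ∣ n then sigma' k (n / d) else 0

/-- `ω(n)`, the number of distinct prime divisors of `n`. -/
def omega (n : ℕ) : ℕ := n.primeFactors.card

/-- The Eisenstein series `E_{2k}(dz) = 1 - (4k/B_{2k}) ∑_{n≥1} σ_{2k-1}(n) e^{2πin(dz)}`
as a function on the upper half plane. -/
def Ek (k d : ℕ) (z : ℍ) : ℂ :=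
  1 - (4 * (k : ℂ) / ((bernoulli (2 * k) : ℚ) : ℂ)) *
    ∑' n : ℕ, (sigma' (2 * k - 1) n : ℂ) *
      Complex.exp (2 * Real.pi * Complex.I * (n : ℂ) * ((d : ℂ) * (z : ℂ)))

/-- The matrix `A_c = [[-1,0],[c,-1]] ∈ SL_2(ℤ)`. -/
def Ac (c : ℕ) : Matrix.SpecialLinearGroup (Fin 2) ℤ :=
  ⟨!![-1, 0; (c : ℤ), -1], by simp [Matrix.det_fin_two_of]⟩

/-- `IsExpansionAt f w c h a` : the function `f` (of weight `w`) has the Fourier expansion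
`f(A_c⁻¹ z) = (cz+1)^w ∑_{n≥0} a(n) e^{2πinz/h}` at the cusp `1/c`, `h` being the width. -/
def IsExpansionAt (f : ℍ → ℂ) (w : ℕ) (c h : ℕ) (a : ℕ → ℂ) : Prop :=
  ∀ z : ℍ,
    (Summable fun n : ℕ => a n * Complex.exp (2 * Real.pi * Complex.I * (n : ℂ) * (z : ℂ) / (h : ℂ))) ∧
    f ((Ac c)⁻¹ • z) =
      ((c : ℂ) * (z : ℂ) + 1) ^ w *
        ∑' n : ℕ, a n * Complex.exp (2 * Real.pi * Complex.I * (n : ℂ) * (z : ℂ) / (h : ℂ))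

/-- `IsExpansionInf f a` : `f` has the Fourier expansion `f(z) = ∑_{n≥0} a(n) q^n`,
`q = e^{2πiz}`, at the cusp `∞`. -/
def IsExpansionInf (f : ℍ → ℂ) (a : ℕ → ℂ) : Prop :=
  ∀ z : ℍ,
    (Summable fun n : ℕ => a n * Complex.exp (2 * Real.pi * Complex.I * (n : ℂ) * (z : ℂ))) ∧
    f z = ∑' n : ℕ, a n * Complex.exp (2 * Real.pi * Complex.I * (n : ℂ) * (z : ℂ))

/-- The product `∏_{p ∣ N} (p^{2k} - 1)` over the prime divisors of `N`. -/
def PP (N k : ℕ) : ℂ := ∏ p ∈ N.primeFactors, ((p : ℂ) ^ (2 * k) - 1)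

/-- The point `r z + s` of the upper half plane, for `r > 0`. -/
def mkPt (r s : ℝ) (hr : 0 < r) (z : ℍ) : ℍ :=
  ⟨(r : ℂ) * (z : ℂ) + (s : ℂ), by
    have h : ((r : ℂ) * (z : ℂ) + (s : ℂ)).im = r * z.im := by
      simp [Complex.add_im, Complex.mul_im]
    rw [h]
    exact mul_pos hr z.im_pos⟩

/-- The Dedekind eta function `η(dz)`, for the argument scaled by `d`. -/
def etaQ (d : ℕ) (z : ℍ) : ℂ :=
  Complex.exp (Real.pi * Complex.I * (d : ℂ) * (z : ℂ) / 12) *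
    ∏' n : ℕ, (1 - Complex.exp (2 * Real.pi * Complex.I * ((n : ℂ) + 1) * ((d : ℂ) * (z : ℂ))))

/-- The eta quotient `S(2k,6,i;z)`. -/
def S62 (k i : ℕ) (z : ℍ) : ℂ :=
  (etaQ 1 z ^ 6 * etaQ 6 z / (etaQ 2 z ^ 3 * etaQ 3 z ^ 2)) ^ (2 * k) *
    (etaQ 2 z * etaQ 6 z ^ 5 / (etaQ 1 z ^ 5 * etaQ 3 z)) ^ i *
    (etaQ 2 z ^ 13 * etaQ 3 z ^ 11 / (etaQ 1 z ^ 17 * etaQ 6 z ^ 7))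

/-- `g(dz)` where `g(z) = η²(z)/η(2z)`. -/
def gQ (d : ℕ) (z : ℍ) : ℂ := etaQ d z ^ 2 / etaQ (2 * d) z

/-- The convolution sum `W(a^l, b^m; n) = ∑_{ar+bs=n, r,s ≥ 1} σ_l(r) σ_m(s)`. -/
def Wconv (a l b m n : ℕ) : ℕ :=
  ∑ p ∈ (Finset.range (n + 1) ×ˢ Finset.range (n + 1)).filter
      (fun p => 1 ≤ p.1 ∧ 1 ≤ p.2 ∧ a * p.1 + b * p.2 = n),
    sigma' l p.1 * sigma' m p.2

/-- `N(1^r, p^s; n)`: the number of representations of `n` by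
`a(x_1²+⋯+x_r²) + b(y_1²+⋯+y_s²)`. -/
def repCount2 (a b r s n : ℕ) : ℕ :=
  Set.ncard {x : (Fin r → ℤ) × (Fin s → ℤ) |
    (a : ℤ) * ∑ i, (x.1 i) ^ 2 + (b : ℤ) * ∑ j, (x.2 j) ^ 2 = (n : ℤ)}

/-- The number of representations of `n` by the quadratic form
`∑_{δ ∣ N} ∑_{j=1}^{8 r_δ} δ x_j²`. -/
def repCount (N : ℕ) (r : ℕ → ℕ) (n : ℕ) : ℕ :=
  Set.ncard {x : ((δ : {d : ℕ // d ∈ N.divisors}) × Fin (8 * r δ.1)) → ℤ |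
    ∑ i, ((i.1.1 : ℤ)) * (x i) ^ 2 = (n : ℤ)}

/-! Since `N` is squarefree, every quantity factors over the primes `p ∣ N`: the summand for `t`
is a product of local factors depending only on whether `p` divides `t`, `c` and `d`. Summing over
`t ∣ N` therefore gives `∏_{p ∣ N} (u_p + v_p)`, where `u_p` (`p ∣ t`) and `v_p` (`p ∤ t`) are the
two local factors, and `u_p + v_p` is `p^{2k} - 1` if `p` divides both or neither of `c`, `d`, and
`0` otherwise. -/

namespace Nat

theorem eq_of_primeFactors_eq {m n : ℕ} (hm : Squarefree m) (hn : Squarefree n)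
    (h : m.primeFactors = n.primeFactors) : m = n := by
  rw [← prod_primeFactors_of_squarefree hm, h, prod_primeFactors_of_squarefree hn]

theorem cast_eq_prod_primeFactors_ite {R : Type*} [CommSemiring R] {N x : ℕ}
    (hN : Squarefree N) (hx : x ∣ N) :
    (x : R) = ∏ p ∈ N.primeFactors, if p ∈ x.primeFactors then (p : R) else 1 := by
  rw [prod_ite_mem, inter_eq_right.mpr (primeFactors_mono hx hN.ne_zero), ← cast_prod,
    prod_primeFactors_of_squarefree (hN.squarefree_of_dvd hx)]

theorem sum_divisors_prod_ite_eq_prod_add {R : Type*} [CommSemiring R] {N : ℕ}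
    (hN : Squarefree N) (u v : ℕ → R) :
    ∑ t ∈ N.divisors, ∏ p ∈ N.primeFactors, (if p ∈ t.primeFactors then u p else v p) =
      ∏ p ∈ N.primeFactors, (u p + v p) := by
  rw [prod_add]
  refine sum_nbij' primeFactors (fun T => ∏ p ∈ T, p) ?_ ?_ ?_ ?_ ?_
  · intro t ht
    exact mem_powerset.mpr (primeFactors_mono (dvd_of_mem_divisors ht) hN.ne_zero)
  · intro T hT
    refine mem_divisors.mpr ⟨?_, hN.ne_zero⟩
    rw [← prod_primeFactors_of_squarefree hN]
    exact prod_dvd_prod_of_subset _ _ _ (mem_powerset.mp hT)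
  · intro t ht
    exact prod_primeFactors_of_squarefree (hN.squarefree_of_dvd (dvd_of_mem_divisors ht))
  · intro T hT
    exact primeFactors_prod fun p hp => prime_of_mem_primeFactors (mem_powerset.mp hT hp)
  · intro t ht
    rw [prod_ite, filter_mem_eq_inter, ← sdiff_eq_filter,
      inter_eq_right.mpr (primeFactors_mono (dvd_of_mem_divisors ht) hN.ne_zero)]

end Nat

theorem neg_one_pow_card_eq_prod_ite {R ι : Type*} [CommMonoid R] [HasDistribNeg R]
    [DecidableEq ι] {s t : Finset ι} (h : t ⊆ s) :
    (-1 : R) ^ t.card = ∏ i ∈ s, if i ∈ t then -1 else 1 := by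
  rw [prod_ite_mem, inter_eq_right.mpr h, prod_const]

theorem orthogonality_summand_eq_prod {K : Type*} [Field K] [CharZero K] {N c d t : ℕ}
    (hN : Squarefree N) (hc : c ∣ N) (hd : d ∣ N) (ht : t ∣ N) (n : ℕ) :
    (-1 : K) ^ (omega t + omega c) *
        (((N : K) * (Nat.gcd c t : K) / (t : K)) * ((Nat.gcd t d : K) / (d : K))) ^ n =
      ∏ p ∈ N.primeFactors,
        if p ∈ t.primeFactors then (if p ∈ c.primeFactors then (p : K) ^ n else -1)
        else (if p ∈ c.primeFactors then -1 else 1) *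
          (if p ∈ d.primeFactors then 1 else (p : K) ^ n) := by
  have hN0 := hN.ne_zero
  have hgcd {a b : ℕ} (ha : a ∣ N) : Nat.gcd a b ∣ N := (Nat.gcd_dvd_left a b).trans ha
  rw [omega, omega, pow_add, neg_one_pow_card_eq_prod_ite (Nat.primeFactors_mono ht hN0),
    neg_one_pow_card_eq_prod_ite (Nat.primeFactors_mono hc hN0),
    Nat.cast_eq_prod_primeFactors_ite hN dvd_rfl, Nat.cast_eq_prod_primeFactors_ite hN ht,
    Nat.cast_eq_prod_primeFactors_ite hN hd, Nat.cast_eq_prod_primeFactors_ite hN (hgcd hc),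
    Nat.cast_eq_prod_primeFactors_ite hN (hgcd ht),
    Nat.primeFactors_gcd (ne_zero_of_dvd_ne_zero hN0 hc) (ne_zero_of_dvd_ne_zero hN0 ht),
    Nat.primeFactors_gcd (ne_zero_of_dvd_ne_zero hN0 ht) (ne_zero_of_dvd_ne_zero hN0 hd),
    ← prod_mul_distrib, ← prod_div_distrib, ← prod_mul_distrib, ← prod_div_distrib,
    ← prod_mul_distrib, ← prod_pow, ← prod_mul_distrib]
  refine prod_congr rfl fun p hp => ?_
  have hp0 : (p : K) ≠ 0 := Nat.cast_ne_zero.mpr (Nat.prime_of_mem_primeFactors hp).ne_zero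
  by_cases hpt : p ∈ t.primeFactors <;> by_cases hpc : p ∈ c.primeFactors <;>
    by_cases hpd : p ∈ d.primeFactors <;> simp [hp, hpt, hpc, hpd, hp0]

theorem stmt2_general (N k : ℕ) (hN : Squarefree N) (c d : ℕ)
    (hc : c ∣ N) (hd : d ∣ N) :
    (∑ t ∈ N.divisors,
        (-1 : ℚ) ^ (omega t + omega c) *
          (((N : ℚ) * (Nat.gcd c t : ℚ) / (t : ℚ)) * ((Nat.gcd t d : ℚ) / (d : ℚ))) ^ (2 * k))
      = if c = d then ∏ p ∈ N.primeFactors, ((p : ℚ) ^ (2 * k) - 1) else 0 := by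
  rw [sum_congr rfl fun t ht =>
      orthogonality_summand_eq_prod hN hc hd (Nat.dvd_of_mem_divisors ht) (2 * k),
    Nat.sum_divisors_prod_ite_eq_prod_add hN]
  split_ifs with hcd
  · subst hcd
    refine prod_congr rfl fun p _ => ?_
    split_ifs <;> ring
  · have hN0 := hN.ne_zero
    have hCD : c.primeFactors ≠ d.primeFactors := fun h =>
      hcd (Nat.eq_of_primeFactors_eq (hN.squarefree_of_dvd hc) (hN.squarefree_of_dvd hd) h)
    obtain ⟨p, hp⟩ := not_forall.mp (mt Finset.ext hCD)
    have hpN : p ∈ N.primeFactors := by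
      by_cases hpc : p ∈ c.primeFactors
      · exact Nat.primeFactors_mono hc hN0 hpc
      · exact Nat.primeFactors_mono hd hN0 (by tauto)
    exact prod_eq_zero hpN (by split_ifs <;> simp_all)

/-- Lemma 3.1, orthogonality relation: for `N` square-free, `k > 1` and
`c, d ∣ N`, `∑_{t∣N} (-1)^{ω(t)+ω(c)} ((N gcd(c,t)/t)(gcd(t,d)/d))^{2k}` equals
`∏_{p∣N}(p^{2k}-1)` if `c = d` and `0` otherwise. -/
theorem stmt2 (N k : ℕ) (hN : Squarefree N) (hk : 1 < k) (c d : ℕ)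
    (hc : c ∣ N) (hd : d ∣ N) :
    (∑ t ∈ N.divisors,
        (-1 : ℚ) ^ (omega t + omega c) *
          (((N : ℚ) * (Nat.gcd c t : ℚ) / (t : ℚ)) * ((Nat.gcd t d : ℚ) / (d : ℚ))) ^ (2 * k))
      = if c = d then ∏ p ∈ N.primeFactors, ((p : ℚ) ^ (2 * k) - 1) else 0 :=
  stmt2_general N k hN c d hc hd

end
end

section
/- Let N ∈ ℕ be square-free, k > 1 an integer, c, d | N, and define T(c,d;N) = Σ_{t|N} (−1)^{ω(t)+ω(c)} · ( (N·gcd(c,t)/t) · (gcd(t,d)/d) )^{2k}. Then for every prime p dividing N, T(c,d;N) = (p^{2k} − (gcd(c,p)·gcd(d,p))^{2k}) · T(c,d;N/p). -/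
open Complex UpperHalfPlane Finset

noncomputable section

/-! The divisors of `p * M` with `p ∤ M` are the `t ∣ M` and the `p * t`. Passing from `M` to
`p * M` multiplies the term of `t` by `p ^ (2k)`, while the term of `p * t` is the term of `t`
times `-(gcd(c,p) gcd(d,p)) ^ (2k)`: the sign comes from `ω(p t) = ω(t) + 1`, the factor from
`gcd(c, p t) = gcd(c,p) gcd(c,t)`, and the `p` of `N = p M` cancels the `p` of `p t`. -/

def T (k c d N : ℕ) : ℚ :=
  ∑ t ∈ N.divisors,
    (-1 : ℚ) ^ (omega t + omega c) *
      (((N : ℚ) * (Nat.gcd c t : ℚ) / (t : ℚ)) * ((Nat.gcd t d : ℚ) / (d : ℚ))) ^ (2 * k)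

lemma omega_mul_of_coprime {m n : ℕ} (h : m.Coprime n) : omega (m * n) = omega m + omega n := by
  rw [omega, h.primeFactors_mul, card_union_of_disjoint h.disjoint_primeFactors, omega, omega]

lemma Nat.Prime.omega_eq_one {p : ℕ} (hp : p.Prime) : omega p = 1 := by
  rw [omega, hp.primeFactors, card_singleton]

lemma Nat.Prime.sum_divisors_mul_of_coprime {β : Type*} [AddCommMonoid β] {p n : ℕ} (hp : p.Prime)
    (h : p.Coprime n) (f : ℕ → β) :
    ∑ t ∈ (p * n).divisors, f t = ∑ t ∈ n.divisors, (f t + f (p * t)) := by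
  rw [h.divisors_mul, sum_map]
  refine (sum_attach (p.divisors ×ˢ n.divisors) (fun x => f (x.1 * x.2))).trans ?_
  rw [sum_product, hp.divisors, sum_pair hp.one_lt.ne, ← sum_add_distrib]
  simp only [one_mul]

theorem T_prime_mul {k c d p M : ℕ} (hp : p.Prime) (hpM : p.Coprime M) :
    T k c d (p * M) = ((p : ℚ) ^ (2 * k) - ((Nat.gcd c p : ℚ) * (Nat.gcd d p : ℚ)) ^ (2 * k)) *
      T k c d M := by
  rw [T, T, hp.sum_divisors_mul_of_coprime hpM, mul_sum]
  refine sum_congr rfl fun t ht => ?_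
  have hpt : p.Coprime t := hpM.coprime_dvd_right (Nat.dvd_of_mem_divisors ht)
  have hp0 : (p : ℚ) ≠ 0 := by exact_mod_cast hp.ne_zero
  rw [omega_mul_of_coprime hpt, hp.omega_eq_one, hpt.gcd_mul, Nat.gcd_comm (p * t),
    hpt.gcd_mul, Nat.gcd_comm t d]
  push_cast
  field_simp
  ring

theorem stmt3_general (N k : ℕ) (hN : Squarefree N) (c d : ℕ)
    (p : ℕ) (hp : p.Prime) (hpN : p ∣ N) :
    (∑ t ∈ N.divisors,
        (-1 : ℚ) ^ (omega t + omega c) *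
          (((N : ℚ) * (Nat.gcd c t : ℚ) / (t : ℚ)) * ((Nat.gcd t d : ℚ) / (d : ℚ))) ^ (2 * k))
      = ((p : ℚ) ^ (2 * k) - ((Nat.gcd c p : ℚ) * (Nat.gcd d p : ℚ)) ^ (2 * k)) *
          ∑ t ∈ (N / p).divisors,
            (-1 : ℚ) ^ (omega t + omega c) *
              ((((N / p : ℕ) : ℚ) * (Nat.gcd c t : ℚ) / (t : ℚ)) *
                ((Nat.gcd t d : ℚ) / (d : ℚ))) ^ (2 * k) := by
  obtain ⟨M, rfl⟩ := hpN
  rw [Nat.mul_div_cancel_left M hp.pos]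
  exact T_prime_mul hp (Nat.squarefree_mul_iff.mp hN).1

/-- recursion step in the proof of Lemma 3.1: with
`T(c,d;N) = ∑_{t∣N} (-1)^{ω(t)+ω(c)} ((N gcd(c,t)/t)(gcd(t,d)/d))^{2k}`, for every prime
`p ∣ N` one has `T(c,d;N) = (p^{2k} - (gcd(c,p) gcd(d,p))^{2k}) T(c,d;N/p)`. -/
theorem stmt3 (N k : ℕ) (hN : Squarefree N) (hk : 1 < k) (c d : ℕ)
    (hc : c ∣ N) (hd : d ∣ N) (p : ℕ) (hp : p.Prime) (hpN : p ∣ N) :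
    (∑ t ∈ N.divisors,
        (-1 : ℚ) ^ (omega t + omega c) *
          (((N : ℚ) * (Nat.gcd c t : ℚ) / (t : ℚ)) * ((Nat.gcd t d : ℚ) / (d : ℚ))) ^ (2 * k))
      = ((p : ℚ) ^ (2 * k) - ((Nat.gcd c p : ℚ) * (Nat.gcd d p : ℚ)) ^ (2 * k)) *
          ∑ t ∈ (N / p).divisors,
            (-1 : ℚ) ^ (omega t + omega c) *
              ((((N / p : ℕ) : ℚ) * (Nat.gcd c t : ℚ) / (t : ℚ)) *
                ((Nat.gcd t d : ℚ) / (d : ℚ))) ^ (2 * k) :=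
  stmt3_general N k hN c d p hp hpN

end
end
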